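/- arXiv:math/9902002 — 2 statements merged into one kernel-verified Lean document; each statement's English description precedes it below -/
import Mathlib

section
/- In rank 2 with one parabolic point (|S|=1, full flag), for any genus g ≥ 1 the Poincaré series P(t) = ((1+t³)^{2g} − t^{2g}(1+t)^{2g}) / (1−t²)² is a polynomial in t with nonnegative integer coefficients. -/
open Polynomial

noncomputable def auxQ (m : ℕ) : ℤ[X] :=
  (∑ i ∈ Finset.range m, (1 + X ^ 3) ^ i * (1 + X) ^ (m - i) * X ^ (m + 1 - i))
    + (1 + X ^ 3) ^ m * (1 + X ^ 2)

lemma auxQ_succ (m : ℕ) :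
    auxQ (m + 1) = (1 + X ^ 3) * auxQ m + X ^ (m + 2) * (1 + X) ^ (m + 1) := by
  unfold auxQ
  rw [Finset.sum_range_succ']
  simp only [Nat.succ_sub_succ, Nat.sub_zero, pow_zero, one_mul]
  conv_rhs => rw [mul_add, Finset.mul_sum]
  have h : ∀ i ∈ Finset.range m,
      (1 + X ^ 3 : ℤ[X]) ^ (i + 1) * (1 + X) ^ (m - i) * X ^ (m + 1 - i)
        = (1 + X ^ 3) * ((1 + X ^ 3) ^ i * (1 + X) ^ (m - i) * X ^ (m + 1 - i)) :=
    fun i _ => by ring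
  rw [Finset.sum_congr rfl h]
  ring

lemma auxQ_eq (m : ℕ) :
    (1 - X ^ 2) ^ 2 * auxQ m
      = (1 + X ^ 3) ^ (m + 2) - X ^ (m + 2) * (1 + X) ^ (m + 2) := by
  induction m with
  | zero =>
      unfold auxQ
      simp only [Finset.range_zero, Finset.sum_empty, pow_zero, one_mul, zero_add]
      ring
  | succ m ih =>
      rw [auxQ_succ]
      linear_combination (1 + X ^ 3) * ih

lemma coeff_mul_nonneg {p q : ℤ[X]} (hp : ∀ n, 0 ≤ p.coeff n) (hq : ∀ n, 0 ≤ q.coeff n) :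
    ∀ n, 0 ≤ (p * q).coeff n := by
  intro n
  rw [Polynomial.coeff_mul]
  exact Finset.sum_nonneg fun x _ => mul_nonneg (hp _) (hq _)

lemma coeff_one_add_X_pow_nonneg (k : ℕ) : ∀ n, 0 ≤ ((1 + X ^ k : ℤ[X])).coeff n := by
  intro n
  simp only [coeff_add, coeff_one, coeff_X_pow]
  split_ifs <;> norm_num

lemma coeff_one_add_X_nonneg : ∀ n, 0 ≤ ((1 + X : ℤ[X])).coeff n := by
  intro n
  simpa [pow_one] using coeff_one_add_X_pow_nonneg 1 n

lemma coeff_pow_nonneg {p : ℤ[X]} (hp : ∀ n, 0 ≤ p.coeff n) (k : ℕ) :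
    ∀ n, 0 ≤ (p ^ k).coeff n := by
  induction k with
  | zero => intro n; simp [coeff_one]; split_ifs <;> norm_num
  | succ k ih =>
      rw [pow_succ]
      exact coeff_mul_nonneg ih hp

lemma coeff_X_pow_nonneg (k : ℕ) : ∀ n, 0 ≤ ((X : ℤ[X]) ^ k).coeff n := by
  intro n
  rw [coeff_X_pow]
  split_ifs <;> norm_num

lemma auxQ_coeff_nonneg (m : ℕ) : ∀ n, 0 ≤ (auxQ m).coeff n := by
  intro n
  unfold auxQ
  rw [coeff_add]
  apply add_nonneg
  · rw [Polynomial.finset_sum_coeff]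
    apply Finset.sum_nonneg
    intro i _
    exact coeff_mul_nonneg
      (coeff_mul_nonneg (coeff_pow_nonneg (coeff_one_add_X_pow_nonneg 3) i)
        (coeff_pow_nonneg coeff_one_add_X_nonneg _))
      (coeff_X_pow_nonneg _) n
  · exact coeff_mul_nonneg (coeff_pow_nonneg (coeff_one_add_X_pow_nonneg 3) m)
      (coeff_one_add_X_pow_nonneg 2) n

/-- In rank 2 with one parabolic point (full flag), for any genus `g ≥ 1` the Poincaré
series `P(t) = ((1+t³)^{2g} − t^{2g}(1+t)^{2g}) / (1−t²)²` is a polynomial in `t` with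
nonnegative integer coefficients: `(1−t²)²` divides the numerator in `ℤ[t]` and the
quotient has nonnegative coefficients. -/
theorem stmt12 (g : ℕ) (hg : 1 ≤ g) :
    ∃ Q : ℤ[X],
      (1 + X ^ 3) ^ (2 * g) - X ^ (2 * g) * (1 + X) ^ (2 * g) = (1 - X ^ 2) ^ 2 * Q ∧
        ∀ n, 0 ≤ Q.coeff n := by
  obtain ⟨k, rfl⟩ : ∃ k, g = k + 1 := ⟨g - 1, by omega⟩
  refine ⟨auxQ (2 * k), ?_, auxQ_coeff_nonneg _⟩
  have h := auxQ_eq (2 * k)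
  have : 2 * (k + 1) = 2 * k + 2 := by ring
  rw [this, ← h]
end

section
/- The rank 2, two parabolic points Poincaré series (1+t²)((1+t³)^{2g} − t^{2g}(1+t)^{2g})/(1−t²)² is, for every g ≥ 1, a polynomial with nonnegative coefficients whose constant term is 1 and whose coefficient of t² is 3. -/
open Polynomial

open Finset


noncomputable def Qnat (g : ℕ) : ℕ[X] :=
  (1 + X ^ 2) ^ 2 *
    ∑ i ∈ Finset.range g, ((1 + X ^ 3) ^ 2) ^ i * (X ^ 2 * (1 + X) ^ 2) ^ (g - 1 - i)

lemma coeff_one_pow_onaddX3 (n : ℕ) : (((1 : ℕ[X]) + X ^ 3) ^ n).coeff 2 = 0 := by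
  induction n with
  | zero => simp [coeff_one]
  | succ n ih =>
      have : ((1 : ℕ[X]) + X ^ 3) ^ (n + 1) =
          (1 + X ^ 3) ^ n + ((1 + X ^ 3) ^ n) * X ^ 3 := by ring
      rw [this, coeff_add, coeff_mul_X_pow', ih]
      norm_num


/-- The rank 2, two parabolic points Poincaré series
`(1+t²)((1+t³)^{2g} − t^{2g}(1+t)^{2g})/(1−t²)²` is, for every `g ≥ 1`, a polynomial
with nonnegative integer coefficients whose constant term is `1`, and whose coefficient
of `t²` is `3` for `g ≥ 2`. -/
theorem stmt15 (g : ℕ) (hg : 1 ≤ g) :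
    ∃ Q : ℤ[X],
      (1 + X ^ 2) * ((1 + X ^ 3) ^ (2 * g) - X ^ (2 * g) * (1 + X) ^ (2 * g)) =
          (1 - X ^ 2) ^ 2 * Q ∧
        (∀ n, 0 ≤ Q.coeff n) ∧ Q.coeff 0 = 1 ∧ (2 ≤ g → Q.coeff 2 = 3) := by
  refine ⟨(Qnat g).map (Nat.castRingHom ℤ), ?_, ?_, ?_, ?_⟩
  · have hmap : (Qnat g).map (Nat.castRingHom ℤ) =
        (1 + X ^ 2) ^ 2 *
          ∑ i ∈ Finset.range g, ((1 + X ^ 3) ^ 2) ^ i * (X ^ 2 * (1 + X) ^ 2) ^ (g - 1 - i) := by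
      simp [Qnat, Polynomial.map_sum, Polynomial.map_mul, Polynomial.map_pow,
        Polynomial.map_add, Polynomial.map_one]
    rw [hmap]
    set x : ℤ[X] := (1 + X ^ 3) ^ 2 with hx
    set y : ℤ[X] := X ^ 2 * (1 + X) ^ 2 with hy
    have h1 : ((1 : ℤ[X]) + X ^ 3) ^ (2 * g) = x ^ g := by rw [hx, pow_mul]
    have h2 : (X : ℤ[X]) ^ (2 * g) * (1 + X) ^ (2 * g) = y ^ g := by
      rw [hy, mul_pow, pow_mul, pow_mul]
    have geo := geom_sum₂_mul x y g
    have hxy : x - y = (1 - X ^ 2) ^ 2 * (1 + X ^ 2) := by rw [hx, hy]; ring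
    rw [h1, h2, ← geo, hxy]
    ring
  · intro n
    simp [coeff_map]
  · have : (Qnat g).coeff 0 = 1 := by
      rw [coeff_zero_eq_eval_zero]
      simp only [Qnat, eval_mul, eval_pow, eval_add, eval_one, eval_X, eval_finset_sum]
      norm_num
      rw [Finset.sum_eq_single_of_mem (g - 1) (Finset.mem_range.mpr (by omega))]
      · simp
      · intro i hi hne
        rw [zero_pow (by simp at hi; omega)]
    simp [coeff_map, this]
  · intro hg2
    set S : ℕ[X] :=
      ∑ i ∈ Finset.range g, ((1 + X ^ 3) ^ 2) ^ i * (X ^ 2 * (1 + X) ^ 2) ^ (g - 1 - i) with hS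
    have hterm : ∀ i ∈ Finset.range g,
        (((1 + X ^ 3) ^ 2) ^ i * ((X:ℕ[X]) ^ 2 * (1 + X) ^ 2) ^ (g - 1 - i)).coeff 2 =
          if i = g - 2 then 1 else 0 := by
      intro i hi
      simp only [Finset.mem_range] at hi
      rcases eq_or_ne i (g - 2) with h | h
      · subst h
        have hk : g - 1 - (g - 2) = 1 := by omega
        rw [hk]
        have : ((1 + X ^ 3) ^ 2) ^ (g-2) * ((X:ℕ[X]) ^ 2 * (1 + X) ^ 2) ^ 1 =
            (((1 + X ^ 3) ^ 2) ^ (g-2) * (1 + X) ^ 2) * X ^ 2 := by ring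
        rw [this, coeff_mul_X_pow', if_pos (by norm_num : 2 ≤ 2)]
        norm_num [coeff_zero_eq_eval_zero]
      · simp only [if_neg h]
        rcases eq_or_ne i (g - 1) with h1 | h1
        · subst h1
          have hk : g - 1 - (g - 1) = 0 := by omega
          rw [hk, pow_zero, mul_one, ← pow_mul]
          exact coeff_one_pow_onaddX3 _
        · have hk : 2 ≤ g - 1 - i := by omega
          set k := g - 1 - i
          have : ((1 + X ^ 3) ^ 2) ^ i * ((X:ℕ[X]) ^ 2 * (1 + X) ^ 2) ^ k =
              (((1 + X ^ 3) ^ 2) ^ i * ((1 + X) ^ 2) ^ k) * X ^ (2*k) := by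
            rw [mul_pow, ← pow_mul]; ring
          rw [this, coeff_mul_X_pow']
          rw [if_neg (by omega)]
    have hS2 : S.coeff 2 = 1 := by
      rw [hS, finset_sum_coeff, Finset.sum_congr rfl hterm, Finset.sum_ite_eq'
        (Finset.range g) (g-2) (fun _ => (1:ℕ))]
      rw [if_pos (Finset.mem_range.mpr (by omega))]
    have hS0 : S.coeff 0 = 1 := by
      rw [coeff_zero_eq_eval_zero, hS]
      simp only [eval_finset_sum, eval_mul, eval_pow, eval_add, eval_one, eval_X]
      norm_num
      rw [Finset.sum_eq_single_of_mem (g - 1) (Finset.mem_range.mpr (by omega))]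
      · simp
      · intro i hi hne
        rw [zero_pow (by simp at hi; omega)]
    have hQ : Qnat g = S + (S * X ^ 2 + S * X ^ 2) + S * X ^ 4 := by
      rw [Qnat, ← hS]; ring
    have : (Qnat g).coeff 2 = 3 := by
      rw [hQ]
      simp only [coeff_add, coeff_mul_X_pow']
      norm_num [hS2, hS0]
    simp [coeff_map, this]
end
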